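/- arXiv:2507.00998 — 7 statements merged into one kernel-verified Lean document; each statement's English description precedes it below -/
import Mathlib

section
/- Let z = (z₁, z₂, z₃) ∈ ℂ³ be such that the symmetric 2×2 complex matrix [[z₁, z₃],[z₃, z₂]] is unitary. Then |z₁z₂ − z₃²| = 1, z₁ = conj(z₂)·(z₁z₂ − z₃²), z₂ = conj(z₁)·(z₁z₂ − z₃²), and |z₂| ≤ 1. In particular, φ(z) = (z₁, z₂, z₁z₂ − z₃²) ∈ S_𝔼. -/
/-- The Shilov boundary `S_𝔼` of the tetrablock. -/
def shilovTetrablock : Set (ℂ × ℂ × ℂ) :=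
  {z | z.1 = (starRingEnd ℂ) z.2.1 * z.2.2 ∧ ‖z.2.2‖ = 1 ∧ ‖z.2.1‖ ≤ 1}

/-!
For a unitary `U` one has `U⁻¹ = Uᴴ`, so Cramer's rule `adj U = det U • U⁻¹` becomes
`adj U = det U • Uᴴ`. For `U = !![z₁, z₃; z₃, z₂]` the diagonal of `adj U` is `(z₂, z₁)`, which gives
`z₁ = conj z₂ · det U` and `z₂ = conj z₁ · det U` with `det U = z₁z₂ - z₃²` of modulus one;
`|z₂| ≤ 1` holds for every entry of a unitary matrix.
-/

namespace Matrix

variable {n α : Type*} [Fintype n] [DecidableEq n] [CommRing α] [StarRing α]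

theorem adjugate_eq_det_smul_conjTranspose_of_mem_unitaryGroup {U : Matrix n n α}
    (hU : U ∈ unitaryGroup n α) : adjugate U = U.det • Uᴴ := by
  calc adjugate U
      = adjugate U * (U * Uᴴ) := by
        rw [← star_eq_conjTranspose, mem_unitaryGroup_iff.mp hU, Matrix.mul_one]
    _ = U.det • Uᴴ := by rw [← Matrix.mul_assoc, adjugate_mul, smul_mul_assoc, Matrix.one_mul]

theorem diag_eq_star_mul_det_of_mem_unitaryGroup_fin_two {a b c d : α}
    (hU : !![a, b; c, d] ∈ unitaryGroup (Fin 2) α) :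
    a = star d * (a * d - b * c) ∧ d = star a * (a * d - b * c) := by
  have hadj := adjugate_eq_det_smul_conjTranspose_of_mem_unitaryGroup hU
  rw [adjugate_fin_two_of, det_fin_two_of] at hadj
  constructor
  · simpa [mul_comm] using congrFun (congrFun hadj 1) 1
  · simpa [mul_comm] using congrFun (congrFun hadj 0) 0

end Matrix

theorem phi_maps_shilov_to_shilov (z₁ z₂ z₃ : ℂ)
    (hz : !![z₁, z₃; z₃, z₂] ∈ Matrix.unitaryGroup (Fin 2) ℂ) :
    ‖z₁ * z₂ - z₃ ^ 2‖ = 1 ∧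
      z₁ = (starRingEnd ℂ) z₂ * (z₁ * z₂ - z₃ ^ 2) ∧
      z₂ = (starRingEnd ℂ) z₁ * (z₁ * z₂ - z₃ ^ 2) ∧
      ‖z₂‖ ≤ 1 ∧
      (z₁, z₂, z₁ * z₂ - z₃ ^ 2) ∈ shilovTetrablock := by
  have hdet : !![z₁, z₃; z₃, z₂].det = z₁ * z₂ - z₃ ^ 2 := by
    rw [Matrix.det_fin_two_of, sq]
  have hnorm : ‖z₁ * z₂ - z₃ ^ 2‖ = 1 := by
    rw [← hdet]
    exact CStarRing.norm_of_mem_unitary (Matrix.det_of_mem_unitary hz)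
  obtain ⟨h₁, h₂⟩ := Matrix.diag_eq_star_mul_det_of_mem_unitaryGroup_fin_two hz
  rw [← sq] at h₁ h₂
  have hz₂ : ‖z₂‖ ≤ 1 := entry_norm_bound_of_unitary hz 1 1
  exact ⟨hnorm, h₁, h₂, hz₂, h₁, hnorm, hz₂⟩
end

section
/- The image of S_{𝔯_II} under φ equals S_𝔼, i.e., φ(S_{𝔯_II}) = S_𝔼. In particular, for every (w₁, w₂, w₃) ∈ ℂ³ with w₁ = conj(w₂) w₃, |w₃| = 1 and |w₂| ≤ 1, there exists c ∈ ℂ such that the matrix [[w₁, c],[c, w₂]] is unitary and w₁w₂ − c² = w₃. -/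
/-- The Shilov boundary `S_{𝔯_II}` of the 3-dimensional type-II Cartan domain: symmetric
2×2 unitary matrices, parametrized by their entries. -/
def shilovCartanII : Set (ℂ × ℂ × ℂ) :=
  {z | !![z.1, z.2.2; z.2.2, z.2.1] ∈ Matrix.unitaryGroup (Fin 2) ℂ}

/-- The proper map `φ(z₁, z₂, z₃) = (z₁, z₂, z₁ z₂ − z₃²)`. -/
def phiMap : ℂ × ℂ × ℂ → ℂ × ℂ × ℂ :=
  fun z => (z.1, z.2.1, z.1 * z.2.1 - z.2.2 ^ 2)

/-!
A symmetric unitary `U = !![a, c; c, b]` has `|det U| = 1`, and comparing `Uᴴ = U⁻¹` with the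
adjugate formula gives `a = conj b · det U`; its entries have modulus at most `1`. Conversely,
for `|u| = 1` and `|b| ≤ 1`, the off-diagonal entry `c = s √(1 - |b|²)` with `s² = -u` makes
`!![conj b · u, c; c, b]` unitary with determinant `u`.
-/

open Matrix ComplexConjugate

theorem Matrix.mem_unitaryGroup_fin_two_iff {R : Type*} [CommRing R] [StarRing R]
    (a b c d : R) :
    !![a, b; c, d] ∈ unitaryGroup (Fin 2) R ↔
      a * star a + b * star b = 1 ∧ a * star c + b * star d = 0 ∧
        c * star a + d * star b = 0 ∧ c * star c + d * star d = 1 := by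
  rw [mem_unitaryGroup_iff, ← Matrix.ext_iff]
  simp [Fin.forall_fin_two, mul_apply, Fin.sum_univ_two, and_assoc]

theorem mem_shilovTetrablock_of_symm_mem_unitaryGroup {a b c : ℂ}
    (hU : !![a, c; c, b] ∈ unitaryGroup (Fin 2) ℂ) : (a, b, a * b - c ^ 2) ∈ shilovTetrablock := by
  obtain ⟨-, h₁₂, -, h₂₂⟩ := (mem_unitaryGroup_fin_two_iff a c c b).1 hU
  simp only [Complex.star_def] at h₁₂ h₂₂
  have hdet_unitary := det_of_mem_unitary hU
  have hdet : ‖a * b - c ^ 2‖ = 1 := by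
    simpa [det_fin_two_of, sq] using CStarRing.norm_of_mem_unitary hdet_unitary
  have hb : ‖b‖ ≤ 1 := by simpa using entry_norm_bound_of_unitary hU 1 1
  have ha : a = conj b * (a * b - c ^ 2) := by linear_combination c * h₁₂ - a * h₂₂
  exact ⟨ha, hdet, hb⟩

theorem exists_symm_mem_unitaryGroup {b u : ℂ} (hu : ‖u‖ = 1) (hb : ‖b‖ ≤ 1) :
    ∃ c : ℂ, !![conj b * u, c; c, b] ∈ unitaryGroup (Fin 2) ℂ ∧ conj b * u * b - c ^ 2 = u := by
  obtain ⟨s, hs⟩ := IsAlgClosed.exists_pow_nat_eq (-u) two_pos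
  set r : ℝ := √(1 - ‖b‖ ^ 2)
  have hr : (r : ℂ) ^ 2 = 1 - ‖b‖ ^ 2 := by
    rw [← Complex.ofReal_pow, Real.sq_sqrt (by nlinarith [norm_nonneg b])]
    push_cast; ring
  have hss : s * conj s = 1 := by
    have : ‖s‖ ^ 2 = 1 := by rw [← norm_pow, hs, norm_neg, hu]
    rw [Complex.mul_conj']; exact_mod_cast this
  have huu : u * conj u = 1 := by rw [Complex.mul_conj', hu]; norm_num
  have hbb := Complex.mul_conj' b
  have hs' : conj s ^ 2 = -conj u := by rw [← map_pow, hs, map_neg]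
  refine ⟨s * r, (mem_unitaryGroup_fin_two_iff _ _ _ _).2 ⟨?_, ?_, ?_, ?_⟩,
    by linear_combination u * hbb - r ^ 2 * hs + u * hr⟩ <;>
    simp only [Complex.star_def, map_mul, Complex.conj_conj, Complex.conj_ofReal]
  · linear_combination (b * conj b) * huu + r ^ 2 * hss + hbb + hr
  · linear_combination conj b * conj s * r * hs - conj b * r * s * hss
  · linear_combination s * r * b * hs' - r * b * conj s * hss
  · linear_combination r ^ 2 * hss + hbb + hr

theorem phi_image_shilov :
    phiMap '' shilovCartanII = shilovTetrablock ∧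
      ∀ w₁ w₂ w₃ : ℂ, w₁ = (starRingEnd ℂ) w₂ * w₃ → ‖w₃‖ = 1 →
        ‖w₂‖ ≤ 1 →
        ∃ c : ℂ, !![w₁, c; c, w₂] ∈ Matrix.unitaryGroup (Fin 2) ℂ ∧ w₁ * w₂ - c ^ 2 = w₃ := by
  refine ⟨?_, fun w₁ w₂ w₃ h₁ h₃ h₂ => h₁ ▸ exists_symm_mem_unitaryGroup h₃ h₂⟩
  ext ⟨a, b, u⟩
  constructor
  · rintro ⟨⟨a, b, c⟩, hU, hφ⟩
    exact hφ ▸ mem_shilovTetrablock_of_symm_mem_unitaryGroup hU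
  · rintro ⟨(ha : a = conj b * u), hu, hb⟩
    subst ha
    obtain ⟨c, hU, hdet⟩ := exists_symm_mem_unitaryGroup hu hb
    exact ⟨(_, b, c), hU, by simp only [phiMap, hdet]⟩
end

section
/- In the abstract setting, for all α₁, α₂, α₃ ∈ ℕ, all h ∈ H, and every r ∈ ℕ with r ≥ α₁ + α₂ + α₃, one has N₃^r N₁*^{α₁} N₂*^{α₂} N₃*^{α₃} h = N₃^{r − α₁ − α₂ − α₃} N₂^{α₁} N₁^{α₂} h; in particular this vector lies in H. -/
/-!
Since `N₃ N₃* = 1`, the relation `N₁ = N₂* N₃` gives `N₃ N₁* = N₂`, and likewise `N₃ N₂* = N₁`.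
As `N₃` commutes with `N₁*` and `N₂*`, each factor `Nᵢ*^αᵢ` can absorb `N₃^αᵢ` out of `N₃^r`,
turning the three factors into `N₂^α₁`, `N₁^α₂` and `1`; the result lies in `H` because `H` is
invariant under `N₁`, `N₂`, `N₃`.
-/

open ContinuousLinearMap

section Monoid

variable {M : Type*} [Monoid M]

theorem Commute.pow_add_mul_mul_pow {u x a c : M} (hx : Commute u x) {k : ℕ}
    (hk : u ^ k * a ^ k = c) (n : ℕ) : u ^ (n + k) * x * a ^ k = u ^ n * x * c := by
  rw [pow_add, mul_assoc (u ^ n), (hx.pow_left k).eq, mul_assoc, mul_assoc, hk, ← mul_assoc]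

theorem pow_mul_pow_mul_pow_mul_pow_eq_of_mul_eq {u a₁ a₂ a₃ b₁ b₂ : M}
    (hu₁ : Commute u a₁) (hu₂ : Commute u a₂)
    (h₁ : u * a₁ = b₁) (h₂ : u * a₂ = b₂) (h₃ : u * a₃ = 1)
    {k₁ k₂ k₃ r : ℕ} (hr : k₁ + k₂ + k₃ ≤ r) :
    u ^ r * a₁ ^ k₁ * a₂ ^ k₂ * a₃ ^ k₃ = u ^ (r - k₁ - k₂ - k₃) * b₁ ^ k₁ * b₂ ^ k₂ := by
  obtain ⟨m, rfl⟩ : ∃ m, r = m + k₁ + k₂ + k₃ := ⟨r - (k₁ + k₂ + k₃), by omega⟩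
  have hm : m + k₁ + k₂ + k₃ - k₁ - k₂ - k₃ = m := by omega
  rw [hm]
  have hx₁₂ : Commute u (a₁ ^ k₁ * a₂ ^ k₂) := (hu₁.pow_right k₁).mul_right (hu₂.pow_right k₂)
  calc u ^ (m + k₁ + k₂ + k₃) * a₁ ^ k₁ * a₂ ^ k₂ * a₃ ^ k₃
      = u ^ (m + k₁ + k₂ + k₃) * (a₁ ^ k₁ * a₂ ^ k₂) * a₃ ^ k₃ := by rw [mul_assoc (u ^ _)]
    _ = u ^ (m + k₁ + k₂) * a₁ ^ k₁ * a₂ ^ k₂ := by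
      rw [hx₁₂.pow_add_mul_mul_pow (pow_mul_pow_eq_one k₃ h₃), mul_one, mul_assoc]
    _ = u ^ (m + k₁) * 1 * a₁ ^ k₁ * b₂ ^ k₂ := by
      rw [mul_one, ((hu₁.pow_right k₁).pow_add_mul_mul_pow (h₂ ▸ hu₂.mul_pow k₂).symm)]
    _ = u ^ m * b₁ ^ k₁ * b₂ ^ k₂ := by
      rw [(Commute.one_right u).pow_add_mul_mul_pow (h₁ ▸ hu₁.mul_pow k₁).symm, mul_one]

end Monoid

theorem mul_star_eq_of_eq_star_mul {M : Type*} [Monoid M] [StarMul M] {u a b : M}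
    (hu : u * star u = 1) (h : a = star b * u) : u * star a = b := by
  rw [h, star_mul, star_star, ← mul_assoc, hu, one_mul]

theorem ContinuousLinearMap.mapsTo_pow {R E : Type*} [Semiring R] [TopologicalSpace E]
    [AddCommMonoid E] [Module R E] {T : E →L[R] E} {s : Set E} (hT : Set.MapsTo T s s) (n : ℕ) :
    Set.MapsTo ⇑(T ^ n) s s := by
  rw [FunLike.coe_pow_eq_iterate]
  exact hT.iterate n

theorem pow_shift_into_subspace_general
    {K : Type*} [NormedAddCommGroup K] [InnerProductSpace ℂ K] [CompleteSpace K]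
    (N₁ N₂ N₃ : K →L[ℂ] K)
    -- each `Nᵢ` is normal and the commutation extends to adjoints
    (hcadj : ∀ M ∈ ({N₁, N₂, N₃} : Set (K →L[ℂ] K)), ∀ M' ∈ ({N₁, N₂, N₃} : Set (K →L[ℂ] K)),
      M * adjoint M' = adjoint M' * M)
    (hU₂ : N₃ * adjoint N₃ = 1)
    (hrel₁ : N₁ = adjoint N₂ * N₃) (hrel₂ : N₂ = adjoint N₁ * N₃)
    -- `H` is a closed subspace invariant under `N₁, N₂, N₃`
    (H : Submodule ℂ K)
    (hinv₁ : ∀ x ∈ H, N₁ x ∈ H) (hinv₂ : ∀ x ∈ H, N₂ x ∈ H) (hinv₃ : ∀ x ∈ H, N₃ x ∈ H)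
    (α₁ α₂ α₃ : ℕ) (h : K) (hh : h ∈ H) (r : ℕ) (hr : α₁ + α₂ + α₃ ≤ r) :
    (N₃ ^ r) ((adjoint N₁ ^ α₁) ((adjoint N₂ ^ α₂) ((adjoint N₃ ^ α₃) h))) =
        (N₃ ^ (r - α₁ - α₂ - α₃)) ((N₂ ^ α₁) ((N₁ ^ α₂) h)) ∧
      (N₃ ^ r) ((adjoint N₁ ^ α₁) ((adjoint N₂ ^ α₂) ((adjoint N₃ ^ α₃) h))) ∈ H := by
  simp only [← star_eq_adjoint] at hcadj hU₂ hrel₁ hrel₂ ⊢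
  have key : N₃ ^ r * star N₁ ^ α₁ * star N₂ ^ α₂ * star N₃ ^ α₃ =
      N₃ ^ (r - α₁ - α₂ - α₃) * N₂ ^ α₁ * N₁ ^ α₂ :=
    pow_mul_pow_mul_pow_mul_pow_eq_of_mul_eq (hcadj N₃ (by simp) N₁ (by simp))
      (hcadj N₃ (by simp) N₂ (by simp)) (mul_star_eq_of_eq_star_mul hU₂ hrel₁)
      (mul_star_eq_of_eq_star_mul hU₂ hrel₂) hU₂ hr
  have hvec : (N₃ ^ r) ((star N₁ ^ α₁) ((star N₂ ^ α₂) ((star N₃ ^ α₃) h))) =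
      (N₃ ^ (r - α₁ - α₂ - α₃)) ((N₂ ^ α₁) ((N₁ ^ α₂) h)) := congrArg (· h) key
  refine ⟨hvec, hvec ▸ ?_⟩
  exact mapsTo_pow hinv₃ _ (mapsTo_pow hinv₂ _ (mapsTo_pow hinv₁ _ hh))

theorem pow_shift_into_subspace
    {K : Type*} [NormedAddCommGroup K] [InnerProductSpace ℂ K] [CompleteSpace K]
    (N₁ N₂ N₃ : K →L[ℂ] K)
    -- the tuple is commuting
    (hc : ∀ M ∈ ({N₁, N₂, N₃} : Set (K →L[ℂ] K)), ∀ M' ∈ ({N₁, N₂, N₃} : Set (K →L[ℂ] K)),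
      M * M' = M' * M)
    -- each `Nᵢ` is normal and the commutation extends to adjoints
    (hcadj : ∀ M ∈ ({N₁, N₂, N₃} : Set (K →L[ℂ] K)), ∀ M' ∈ ({N₁, N₂, N₃} : Set (K →L[ℂ] K)),
      M * adjoint M' = adjoint M' * M)
    (hU₁ : adjoint N₃ * N₃ = 1) (hU₂ : N₃ * adjoint N₃ = 1)
    (hrel₁ : N₁ = adjoint N₂ * N₃) (hrel₂ : N₂ = adjoint N₁ * N₃)
    -- `H` is a closed subspace invariant under `N₁, N₂, N₃`
    (H : Submodule ℂ K) (hH : IsClosed (H : Set K))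
    (hinv₁ : ∀ x ∈ H, N₁ x ∈ H) (hinv₂ : ∀ x ∈ H, N₂ x ∈ H) (hinv₃ : ∀ x ∈ H, N₃ x ∈ H)
    (α₁ α₂ α₃ : ℕ) (h : K) (hh : h ∈ H) (r : ℕ) (hr : α₁ + α₂ + α₃ ≤ r) :
    (N₃ ^ r) ((adjoint N₁ ^ α₁) ((adjoint N₂ ^ α₂) ((adjoint N₃ ^ α₃) h))) =
        (N₃ ^ (r - α₁ - α₂ - α₃)) ((N₂ ^ α₁) ((N₁ ^ α₂) h)) ∧
      (N₃ ^ r) ((adjoint N₁ ^ α₁) ((adjoint N₂ ^ α₂) ((adjoint N₃ ^ α₃) h))) ∈ H :=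
  pow_shift_into_subspace_general N₁ N₂ N₃ hcadj hU₂ hrel₁ hrel₂ H hinv₁ hinv₂ hinv₃ α₁ α₂ α₃ h hh r
    hr
end

section
/- In the abstract setting, for every vector f in the linear span of { N₁*^{α₁} N₂*^{α₂} N₃*^{α₃} h : h ∈ H, α₁, α₂, α₃ ∈ ℕ }, there exists r ∈ ℕ such that N₃^r f ∈ H. -/
open ContinuousLinearMap

theorem span_pow_shift_into_subspace
    {K : Type*} [NormedAddCommGroup K] [InnerProductSpace ℂ K] [CompleteSpace K]
    (N₁ N₂ N₃ : K →L[ℂ] K)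
    -- the tuple is commuting
    (hc : ∀ M ∈ ({N₁, N₂, N₃} : Set (K →L[ℂ] K)), ∀ M' ∈ ({N₁, N₂, N₃} : Set (K →L[ℂ] K)),
      M * M' = M' * M)
    -- each `Nᵢ` is normal and the commutation extends to adjoints
    (hcadj : ∀ M ∈ ({N₁, N₂, N₃} : Set (K →L[ℂ] K)), ∀ M' ∈ ({N₁, N₂, N₃} : Set (K →L[ℂ] K)),
      M * adjoint M' = adjoint M' * M)
    (hU₁ : adjoint N₃ * N₃ = 1) (hU₂ : N₃ * adjoint N₃ = 1)
    (hrel₁ : N₁ = adjoint N₂ * N₃) (hrel₂ : N₂ = adjoint N₁ * N₃)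
    -- `H` is a closed subspace invariant under `N₁, N₂, N₃`
    (H : Submodule ℂ K) (hH : IsClosed (H : Set K))
    (hinv₁ : ∀ x ∈ H, N₁ x ∈ H) (hinv₂ : ∀ x ∈ H, N₂ x ∈ H) (hinv₃ : ∀ x ∈ H, N₃ x ∈ H)
    (f : K)
    (hf : f ∈ Submodule.span ℂ {x : K | ∃ h ∈ H, ∃ α₁ α₂ α₃ : ℕ,
      x = (adjoint N₁ ^ α₁) ((adjoint N₂ ^ α₂) ((adjoint N₃ ^ α₃) h))}) :
    ∃ r : ℕ, (N₃ ^ r) f ∈ H := by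
  have m1 : N₁ ∈ ({N₁, N₂, N₃} : Set (K →L[ℂ] K)) := by simp
  have m2 : N₂ ∈ ({N₁, N₂, N₃} : Set (K →L[ℂ] K)) := by simp
  have m3 : N₃ ∈ ({N₁, N₂, N₃} : Set (K →L[ℂ] K)) := by simp
  -- commutation facts
  have c31 : Commute N₃ (adjoint N₁) := hcadj N₃ m3 N₁ m1
  have c32 : Commute N₃ (adjoint N₂) := hcadj N₃ m3 N₂ m2
  have c33 : Commute N₃ (adjoint N₃) := hcadj N₃ m3 N₃ m3
  have c3n1 : Commute N₃ N₁ := (hc N₁ m1 N₃ m3).symm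
  have c3n2 : Commute N₃ N₂ := (hc N₂ m2 N₃ m3).symm
  -- key products
  have e1 : N₃ * adjoint N₁ = N₂ := c31.eq.trans hrel₂.symm
  have e2 : N₃ * adjoint N₂ = N₁ := c32.eq.trans hrel₁.symm
  have e3 : N₃ * adjoint N₃ = 1 := hU₂
  -- power versions
  have p1 : ∀ n : ℕ, N₃ ^ n * adjoint N₁ ^ n = N₂ ^ n := fun n => by
    rw [← c31.mul_pow, e1]
  have p2 : ∀ n : ℕ, N₃ ^ n * adjoint N₂ ^ n = N₁ ^ n := fun n => by
    rw [← c32.mul_pow, e2]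
  have p3 : ∀ n : ℕ, N₃ ^ n * adjoint N₃ ^ n = 1 := fun n => by
    rw [← c33.mul_pow, e3, one_pow]
  -- invariance of H under powers
  have hpow : ∀ (T : K →L[ℂ] K), (∀ x ∈ H, T x ∈ H) → ∀ (n : ℕ) (x : K), x ∈ H →
      (T ^ n) x ∈ H := by
    intro T hT n
    induction n with
    | zero => intro x hx; simpa using hx
    | succ n ih =>
      intro x hx
      rw [pow_succ]
      exact ih _ (hT x hx)
  -- monotonicity in the exponent
  have mono : ∀ (x : K) (r s : ℕ), r ≤ s → (N₃ ^ r) x ∈ H → (N₃ ^ s) x ∈ H := by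
    intro x r s hrs hx
    obtain ⟨k, rfl⟩ := Nat.exists_eq_add_of_le hrs
    rw [pow_add, Commute.eq (Commute.pow_pow (Commute.refl N₃) r k)]
    exact hpow N₃ hinv₃ k _ hx
  induction hf using Submodule.span_induction with
  | mem x hx =>
    obtain ⟨h, hh, a, b, c, rfl⟩ := hx
    refine ⟨c + (b + a), ?_⟩
    have step : (N₃ ^ (c + (b + a)))
        ((adjoint N₁ ^ a) ((adjoint N₂ ^ b) ((adjoint N₃ ^ c) h)))
        = (N₂ ^ a) ((N₁ ^ b) h) := by
      have hc31 : ∀ (m k : ℕ) (y : K), (N₃ ^ m) ((N₂ ^ k) y) = (N₂ ^ k) ((N₃ ^ m) y) := by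
        intro m k y
        have := (c3n2.pow_pow m k).eq
        calc (N₃ ^ m) ((N₂ ^ k) y) = (N₃ ^ m * N₂ ^ k) y := rfl
          _ = (N₂ ^ k * N₃ ^ m) y := by rw [this]
          _ = (N₂ ^ k) ((N₃ ^ m) y) := rfl
      have hc32 : ∀ (m k : ℕ) (y : K), (N₃ ^ m) ((N₁ ^ k) y) = (N₁ ^ k) ((N₃ ^ m) y) := by
        intro m k y
        have := (c3n1.pow_pow m k).eq
        calc (N₃ ^ m) ((N₁ ^ k) y) = (N₃ ^ m * N₁ ^ k) y := rfl
          _ = (N₁ ^ k * N₃ ^ m) y := by rw [this]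
          _ = (N₁ ^ k) ((N₃ ^ m) y) := rfl
      have s1 : ∀ (n : ℕ) (y : K), (N₃ ^ n) ((adjoint N₁ ^ n) y) = (N₂ ^ n) y := by
        intro n y
        calc (N₃ ^ n) ((adjoint N₁ ^ n) y) = (N₃ ^ n * adjoint N₁ ^ n) y := rfl
          _ = (N₂ ^ n) y := by rw [p1]
      have s2 : ∀ (n : ℕ) (y : K), (N₃ ^ n) ((adjoint N₂ ^ n) y) = (N₁ ^ n) y := by
        intro n y
        calc (N₃ ^ n) ((adjoint N₂ ^ n) y) = (N₃ ^ n * adjoint N₂ ^ n) y := rfl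
          _ = (N₁ ^ n) y := by rw [p2]
      have s3 : ∀ (n : ℕ) (y : K), (N₃ ^ n) ((adjoint N₃ ^ n) y) = y := by
        intro n y
        calc (N₃ ^ n) ((adjoint N₃ ^ n) y) = (N₃ ^ n * adjoint N₃ ^ n) y := rfl
          _ = y := by rw [p3]; rfl
      calc (N₃ ^ (c + (b + a)))
            ((adjoint N₁ ^ a) ((adjoint N₂ ^ b) ((adjoint N₃ ^ c) h)))
          = (N₃ ^ c) ((N₃ ^ b) ((N₃ ^ a)
              ((adjoint N₁ ^ a) ((adjoint N₂ ^ b) ((adjoint N₃ ^ c) h))))) := by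
            rw [pow_add, pow_add]; rfl
        _ = (N₃ ^ c) ((N₃ ^ b) ((N₂ ^ a) ((adjoint N₂ ^ b) ((adjoint N₃ ^ c) h)))) := by
            rw [s1]
        _ = (N₃ ^ c) ((N₂ ^ a) ((N₃ ^ b) ((adjoint N₂ ^ b) ((adjoint N₃ ^ c) h)))) := by
            rw [hc31]
        _ = (N₃ ^ c) ((N₂ ^ a) ((N₁ ^ b) ((adjoint N₃ ^ c) h))) := by rw [s2]
        _ = (N₂ ^ a) ((N₃ ^ c) ((N₁ ^ b) ((adjoint N₃ ^ c) h))) := by rw [hc31]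
        _ = (N₂ ^ a) ((N₁ ^ b) ((N₃ ^ c) ((adjoint N₃ ^ c) h))) := by rw [hc32]
        _ = (N₂ ^ a) ((N₁ ^ b) h) := by rw [s3]
    rw [step]
    exact hpow N₂ hinv₂ a _ (hpow N₁ hinv₁ b _ hh)
  | zero => exact ⟨0, by simp⟩
  | add x y _ _ hx hy =>
    obtain ⟨r, hr⟩ := hx
    obtain ⟨s, hs⟩ := hy
    refine ⟨max r s, ?_⟩
    rw [map_add]
    exact H.add_mem (mono x r _ (le_max_left r s) hr) (mono y s _ (le_max_right r s) hs)
  | smul a x _ hx =>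
    obtain ⟨r, hr⟩ := hx
    exact ⟨r, by rw [map_smul]; exact H.smul_mem a hr⟩
end

section
/- (Key lemma, abstract form.) In the abstract setting, assume in addition the minimality condition: K equals the closed linear span of { N₁*^{α₁} N₂*^{α₂} N₃*^{α₃} h : h ∈ H, α₁, α₂, α₃ ∈ ℕ }. Let A be a bounded linear operator on H satisfying A T₁ = T₂* A T₃, A T₂ = T₁* A T₃, and T₃* A T₃ = A. Then there exists a bounded linear operator X on K such that P X|_H = A (i.e., for all h ∈ H, A h equals the orthogonal projection of X h onto H), X Nᵢ = Nᵢ X for i = 1, 2, 3, and ‖X‖ = ‖A‖. -/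
/-!
Write `U = N₃` and `T = U|_H`. The operators `Xₙ = U*ⁿ (A ⊕ 0) Uⁿ` all have norm at most `‖A‖`.
For `h ∈ H`, the relation `T* A T = A` makes `Xₘ h - Xₙ h` orthogonal to `Xₙ h` whenever
`m ≥ n`, so `‖Xₙ h‖²` increases and `Xₙ h` is Cauchy. Since `Xₙ₊₁ U* = U* Xₙ`, convergence spreads
to every `U*ᵃ h`; as `N₁* = U* N₂` and `N₂* = U* N₁`, these span a dense subspace by minimality,
so `Xₙ` converges strongly to some `X` with `‖X‖ ≤ ‖A‖`. The compression of every `Xₙ` to `H`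
is `A`, and `U* X U = X`. Finally, the Brown–Halmos relation `A T₁ = T₂* A T` rewrites the
commutator `A T₁ - T₁ A` as `T₂* (A T - T A)`, and `(A T - T A) Tⁿ h` is the increment
`Xₙ₊₁ h - Xₙ h`, which tends to `0`; hence `X N₁ = N₁ X` on `H`, and on all of `K` because
both sides commute with `U*`.
-/

open ContinuousLinearMap

/-- The restriction of a continuous linear operator to an invariant subspace, as a
continuous linear operator on that subspace. -/
noncomputable def restrictCLM {K : Type*} [NormedAddCommGroup K] [InnerProductSpace ℂ K]
    (N : K →L[ℂ] K) (H : Submodule ℂ K) (hN : ∀ x ∈ H, N x ∈ H) : H →L[ℂ] H where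
  toFun x := ⟨N x, hN x x.2⟩
  map_add' x y := by ext; simp
  map_smul' c x := by ext; simp
  cont := (N.continuous.comp continuous_subtype_val).subtype_mk _

open Filter Topology

theorem star_pow_mul_mul_pow_of_star_mul_mul {R : Type*} [Monoid R] [StarMul R] {t a : R}
    (h : star t * a * t = a) (n : ℕ) : star (t ^ n) * a * t ^ n = a := by
  induction n with
  | zero => simp
  | succ n ih =>
    calc star (t ^ (n + 1)) * a * t ^ (n + 1) = star t * (star (t ^ n) * a * t ^ n) * t := by
          simp only [pow_succ, star_mul, mul_assoc]
      _ = a := by rw [ih, h]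

theorem commute_star_of_mem_unitary {R : Type*} [Monoid R] [StarMul R] {u x : R}
    (hu : u ∈ unitary R) (h : Commute u x) : Commute (star u) x := by
  rw [commute_unitary_iff_star_left_conjugate (Unitary.star_mem hu), star_star]
  exact (commute_unitary_iff_star_right_conjugate hu).1 h

theorem cauchySeq_of_re_inner_eq_norm_sq {𝕜 E : Type*} [RCLike 𝕜] [NormedAddCommGroup E]
    [InnerProductSpace 𝕜 E] {v : ℕ → E} {C : ℝ} (hC : ∀ n, ‖v n‖ ≤ C)
    (hv : ∀ n k, RCLike.re (inner 𝕜 (v (n + k)) (v n)) = ‖v n‖ ^ 2) : CauchySeq v := by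
  have hdist : ∀ n k, dist (v (n + k)) (v n) ^ 2 = ‖v (n + k)‖ ^ 2 - ‖v n‖ ^ 2 := by
    intro n k
    rw [dist_eq_norm, @norm_sub_sq 𝕜, hv]
    ring
  have hmono : Monotone fun n => ‖v n‖ ^ 2 :=
    monotone_nat_of_le_succ fun n => sub_nonneg.1 <| hdist n 1 ▸ sq_nonneg _
  have hbdd : BddAbove (Set.range fun n => ‖v n‖ ^ 2) :=
    ⟨C ^ 2, Set.forall_mem_range.2 fun n => pow_le_pow_left₀ (norm_nonneg _) (hC n) 2⟩
  have hnorm := (tendsto_atTop_ciSup hmono hbdd).cauchySeq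
  rw [Metric.cauchySeq_iff'] at hnorm ⊢
  intro ε hε
  obtain ⟨N, hN⟩ := hnorm (ε ^ 2) (by positivity)
  refine ⟨N, fun n hn => ?_⟩
  obtain ⟨k, rfl⟩ := Nat.exists_eq_add_of_le hn
  have hk := (abs_lt.1 (Real.dist_eq _ _ ▸ hN (N + k) hn)).2
  exact lt_of_pow_lt_pow_left₀ 2 hε.le (by rw [hdist]; linarith)

section Density

variable {𝕜 E F : Type*} [NontriviallyNormedField 𝕜] [NormedAddCommGroup E] [NormedSpace 𝕜 E]
  [NormedAddCommGroup F] [NormedSpace 𝕜 F] {T : ℕ → E →L[𝕜] F} {C : ℝ}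

theorem isClosed_setOf_cauchySeq_apply (hT : ∀ n, ‖T n‖ ≤ C) :
    IsClosed {x | CauchySeq fun n => T n x} := by
  have hequi : Equicontinuous fun p : ℕ × ℕ => ⇑(T p.1 - T p.2) :=
    ((NormedSpace.equicontinuous_TFAE fun p : ℕ × ℕ => T p.1 - T p.2).out 1 5).2
      (⟨C + C, fun p => (norm_sub_le _ _).trans (add_le_add (hT _) (hT _))⟩ :
        ∃ C', ∀ p : ℕ × ℕ, ‖T p.1 - T p.2‖ ≤ C')
  simp only [CauchySeq, IsUniformAddGroup.cauchy_map_iff_tendsto, atTop_neBot, true_and]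
  exact hequi.isClosed_setOfPred_tendsto (f := 0) continuous_const

theorem cauchySeq_apply_of_dense (hT : ∀ n, ‖T n‖ ≤ C) {s : Set E}
    (hs : Dense (Submodule.span 𝕜 s : Set E)) (h : ∀ x ∈ s, CauchySeq fun n => T n x) (x : E) :
    CauchySeq fun n => T n x := by
  let S : Submodule 𝕜 E :=
    { carrier := {x | CauchySeq fun n => T n x}
      add_mem' := fun {x y} hx hy => by
        simp only [Set.mem_ofPred_eq, map_add]
        exact hx.add hy
      zero_mem' := by simpa only [Set.mem_ofPred_eq, map_zero] using cauchySeq_const (0 : F)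
      smul_mem' := fun c x hx => by
        simp only [Set.mem_ofPred_eq, map_smul]
        exact (uniformContinuous_const_smul c).comp_cauchySeq hx }
  have hspan : Submodule.span 𝕜 s ≤ S := Submodule.span_le.2 h
  exact (isClosed_setOf_cauchySeq_apply hT).closure_subset_iff.2 hspan (hs x)

theorem exists_tendsto_apply_of_dense [CompleteSpace F] (hT : ∀ n, ‖T n‖ ≤ C) {s : Set E}
    (hs : Dense (Submodule.span 𝕜 s : Set E)) (h : ∀ x ∈ s, CauchySeq fun n => T n x) :
    ∃ X : E →L[𝕜] F, ‖X‖ ≤ C ∧ ∀ x, Tendsto (fun n => T n x) atTop (𝓝 (X x)) := by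
  choose f hf using fun x => cauchySeq_tendsto_of_complete (cauchySeq_apply_of_dense hT hs h x)
  have hbound : ∀ x, ‖f x‖ ≤ C * ‖x‖ := fun x =>
    le_of_tendsto' (hf x).norm fun n => (T n).le_of_opNorm_le (hT n) x
  let L := linearMapOfTendsto f (fun n => (T n : E →ₗ[𝕜] F)) (tendsto_pi_nhds.2 hf)
  refine ⟨L.mkContinuous C hbound, ?_, hf⟩
  exact LinearMap.mkContinuous_norm_le _ ((norm_nonneg _).trans (hT 0)) _

theorem eq_of_eqOn_of_commute {V Y Z : E →L[𝕜] E} {s : Set E}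
    (hs : Dense (Submodule.span 𝕜 (⋃ a : ℕ, ⇑(V ^ a) '' s) : Set E)) (hY : Commute V Y)
    (hZ : Commute V Z) (h : Set.EqOn Y Z s) : Y = Z := by
  refine ext_on hs ?_
  simp only [Set.EqOn, Set.mem_iUnion, Set.mem_image]
  rintro _ ⟨a, x, hx, rfl⟩
  rw [← mul_apply_eq_comp, ← (hY.pow_left a).eq, mul_apply_eq_comp, h hx,
    ← mul_apply_eq_comp, (hZ.pow_left a).eq, mul_apply_eq_comp]

end Density

section Restriction

variable {K : Type*} [NormedAddCommGroup K] [InnerProductSpace ℂ K] {H : Submodule ℂ K}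

theorem coe_restrictCLM_pow_apply {N : K →L[ℂ] K} (hN : ∀ x ∈ H, N x ∈ H) (n : ℕ) (x : H) :
    ((restrictCLM N H hN ^ n) x : K) = (N ^ n) x := by
  induction n generalizing x with
  | zero => rfl
  | succ n ih => rw [pow_succ, pow_succ, mul_apply_eq_comp, mul_apply_eq_comp, ih]; rfl

theorem commute_restrictCLM {M N : K →L[ℂ] K} (hM : ∀ x ∈ H, M x ∈ H)
    (hN : ∀ x ∈ H, N x ∈ H) (h : Commute M N) :
    Commute (restrictCLM M H hM) (restrictCLM N H hN) := by
  ext x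
  exact congr($h.eq x)

variable [CompleteSpace K] [CompleteSpace H]

theorem star_restrictCLM_apply {N : K →L[ℂ] K} (hN : ∀ x ∈ H, N x ∈ H) (x : H) :
    star (restrictCLM N H hN) x = H.orthogonalProjectionOnto (star N x) := by
  refine ext_inner_right ℂ fun y => ?_
  rw [Submodule.inner_orthogonalProjectionOnto_eq_of_mem_right, star_eq_adjoint,
    adjoint_inner_left, star_eq_adjoint, adjoint_inner_left]
  rfl

theorem restrictCLM_eq_star_mul {M S U : K →L[ℂ] K} (hM : ∀ x ∈ H, M x ∈ H)
    (hS : ∀ x ∈ H, S x ∈ H) (hU : ∀ x ∈ H, U x ∈ H) (h : M = star S * U) :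
    restrictCLM M H hM = star (restrictCLM S H hS) * restrictCLM U H hU := by
  ext1 x
  rw [mul_apply_eq_comp, star_restrictCLM_apply,
    ← Submodule.orthogonalProjectionOnto_mem_subspace_eq_self (restrictCLM M H hM x)]
  subst h
  rfl

end Restriction

theorem norm_le_of_orthogonalProjectionOnto_apply_eq {𝕜 K : Type*} [RCLike 𝕜]
    [NormedAddCommGroup K] [InnerProductSpace 𝕜 K] {H : Submodule 𝕜 K} [H.HasOrthogonalProjection]
    {X : K →L[𝕜] K} {A : H →L[𝕜] H} (h : ∀ x : H, H.orthogonalProjectionOnto (X x) = A x) :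
    ‖A‖ ≤ ‖X‖ :=
  A.opNorm_le_bound (norm_nonneg X) fun x =>
    calc ‖A x‖ = ‖H.orthogonalProjectionOnto (X x)‖ := by rw [h]
      _ ≤ ‖X x‖ := H.norm_orthogonalProjectionOnto_apply_le _
      _ ≤ ‖X‖ * ‖x‖ := X.le_opNorm _

theorem mapsTo_star_of_eq_star_mul {K : Type*} [NormedAddCommGroup K] [InnerProductSpace ℂ K]
    [CompleteSpace K] {U : K →L[ℂ] K} (hU : U ∈ unitary (K →L[ℂ] K)) {H : Submodule ℂ K}
    {M S : K →L[ℂ] K} (hM : ∀ x ∈ H, M x ∈ H) (hMU : Commute U M) (hMS : M = star S * U) :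
    Set.MapsTo ⇑(star S) (⋃ a : ℕ, ⇑(star U ^ a) '' H) (⋃ a : ℕ, ⇑(star U ^ a) '' H) := by
  have hS : star S = star U * M := by
    rw [(commute_star_of_mem_unitary hU hMU).eq, hMS, mul_assoc,
      Unitary.mul_star_self_of_mem hU, mul_one]
  simp only [Set.MapsTo, Set.mem_iUnion, Set.mem_image, SetLike.mem_coe]
  rintro _ ⟨a, h, hh, rfl⟩
  refine ⟨a + 1, M h, hM h hh, ?_⟩
  rw [hS, pow_succ', mul_apply_eq_comp, mul_apply_eq_comp, ← mul_apply_eq_comp M,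
    ← ((commute_star_of_mem_unitary hU hMU).pow_left a).eq, mul_apply_eq_comp]

section Dilation

variable {K : Type*} [NormedAddCommGroup K] [InnerProductSpace ℂ K] [CompleteSpace K]
  {U : K →L[ℂ] K} {H : Submodule ℂ K} [CompleteSpace H] {A : H →L[ℂ] H}

variable (U H A) in
noncomputable def dilationApprox (n : ℕ) : K →L[ℂ] K :=
  star U ^ n * (H.subtypeL ∘L A ∘L H.orthogonalProjectionOnto) * U ^ n

theorem dilationApprox_add (n m : ℕ) :
    dilationApprox U H A (n + m) = star U ^ m * dilationApprox U H A n * U ^ m := by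
  have hpow : U ^ (n + m) = U ^ n * U ^ m := pow_add U n m
  rw [dilationApprox, dilationApprox, hpow, add_comm, pow_add]
  simp only [mul_assoc]

theorem dilationApprox_apply_coe (hUH : ∀ x ∈ H, U x ∈ H) (n : ℕ) (h : H) :
    dilationApprox U H A n h = (star U ^ n) (A ((restrictCLM U H hUH ^ n) h)) := by
  rw [dilationApprox, mul_apply_eq_comp, mul_apply_eq_comp, ← coe_restrictCLM_pow_apply hUH]
  simp only [comp_apply, Submodule.orthogonalProjectionOnto_mem_subspace_eq_self,
    Submodule.subtypeL_apply]

theorem norm_dilationApprox_le (hU : U ∈ unitary (K →L[ℂ] K)) (n : ℕ) :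
    ‖dilationApprox U H A n‖ ≤ ‖A‖ := by
  rw [dilationApprox, CStarRing.norm_mul_mem_unitary _ (pow_mem hU n),
    CStarRing.norm_mem_unitary_mul _ (pow_mem (Unitary.star_mem hU) n)]
  calc ‖H.subtypeL ∘L A ∘L H.orthogonalProjectionOnto‖
      ≤ ‖H.subtypeL‖ * (‖A‖ * ‖H.orthogonalProjectionOnto‖) :=
        (opNorm_comp_le _ _).trans (by gcongr; exact opNorm_comp_le _ _)
    _ ≤ 1 * (‖A‖ * 1) := by
        gcongr
        exacts [Submodule.norm_subtypeL_le H, H.orthogonalProjectionOnto_norm_le]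
    _ = ‖A‖ := by ring

theorem inner_dilationApprox_apply_coe (hUH : ∀ x ∈ H, U x ∈ H)
    (hA : star (restrictCLM U H hUH) * A * restrictCLM U H hUH = A) (n : ℕ) (h g : H) :
    inner ℂ (dilationApprox U H A n h) (g : K) = inner ℂ (A h) g := by
  rw [dilationApprox_apply_coe hUH, ← star_pow, star_eq_adjoint, adjoint_inner_left,
    ← coe_restrictCLM_pow_apply hUH, ← Submodule.coe_inner, ← adjoint_inner_left]
  have hAn := star_pow_mul_mul_pow_of_star_mul_mul (R := H →L[ℂ] H) hA n
  rw [star_eq_adjoint] at hAn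
  conv_rhs => rw [← hAn, mul_apply_eq_comp, mul_apply_eq_comp]

theorem cauchySeq_dilationApprox_apply_coe (hU : U ∈ unitary (K →L[ℂ] K))
    (hUH : ∀ x ∈ H, U x ∈ H)
    (hA : star (restrictCLM U H hUH) * A * restrictCLM U H hUH = A) (h : H) :
    CauchySeq fun n => dilationApprox U H A n h := by
  have hbound (n : ℕ) : ‖dilationApprox U H A n h‖ ≤ ‖A‖ * ‖h‖ :=
    (le_opNorm _ _).trans (by gcongr; exacts [norm_dilationApprox_le hU n, le_rfl])
  refine cauchySeq_of_re_inner_eq_norm_sq (𝕜 := ℂ) hbound fun n k => ?_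
  rw [add_comm, dilationApprox_add, mul_apply_eq_comp, mul_apply_eq_comp,
    ← coe_restrictCLM_pow_apply hUH, dilationApprox_apply_coe hUH n,
    inner_map_map_of_mem_unitary (pow_mem (Unitary.star_mem hU) n),
    inner_dilationApprox_apply_coe hUH hA,
    norm_map_of_mem_unitary (pow_mem (Unitary.star_mem hU) n), inner_self_eq_norm_sq]
  rfl

theorem dilationApprox_add_apply_star_pow (hU : U ∈ unitary (K →L[ℂ] K)) (n a : ℕ) (x : K) :
    dilationApprox U H A (n + a) ((star U ^ a) x) = (star U ^ a) (dilationApprox U H A n x) := by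
  rw [dilationApprox_add, mul_apply_eq_comp, mul_apply_eq_comp, ← mul_apply_eq_comp (U ^ a),
    ← star_pow, Unitary.mul_star_self_of_mem (pow_mem hU a), one_apply_eq_self]

theorem exists_tendsto_dilationApprox (hU : U ∈ unitary (K →L[ℂ] K)) (hUH : ∀ x ∈ H, U x ∈ H)
    (hA : star (restrictCLM U H hUH) * A * restrictCLM U H hUH = A)
    (hD : Dense (Submodule.span ℂ (⋃ a : ℕ, ⇑(star U ^ a) '' H) : Set K)) :
    ∃ X : K →L[ℂ] K, ‖X‖ ≤ ‖A‖ ∧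
      ∀ x, Tendsto (fun n => dilationApprox U H A n x) atTop (𝓝 (X x)) := by
  refine exists_tendsto_apply_of_dense (norm_dilationApprox_le hU) hD ?_
  simp only [Set.mem_iUnion, Set.mem_image, SetLike.mem_coe]
  rintro _ ⟨a, h, hh, rfl⟩
  rw [← cauchySeq_shift a]
  simp only [dilationApprox_add_apply_star_pow hU]
  exact (star U ^ a).uniformContinuous.comp_cauchySeq
    (cauchySeq_dilationApprox_apply_coe hU hUH hA ⟨h, hh⟩)

theorem norm_dilationApprox_succ_apply_coe_sub (hU : U ∈ unitary (K →L[ℂ] K))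
    (hUH : ∀ x ∈ H, U x ∈ H) (n : ℕ) (h : H) :
    ‖dilationApprox U H A (n + 1) h - dilationApprox U H A n h‖ =
      ‖(A * restrictCLM U H hUH - restrictCLM U H hUH * A) ((restrictCLM U H hUH ^ n) h)‖ := by
  set T := restrictCLM U H hUH
  have hshift :
      (star U ^ n) (A ((T ^ n) h) : K) = (star U ^ (n + 1)) (T (A ((T ^ n) h)) : K) := by
    rw [pow_succ, mul_apply_eq_comp]
    congr 1
    show _ = (star U * U) _
    rw [Unitary.star_mul_self_of_mem hU, one_apply_eq_self]
  rw [dilationApprox_apply_coe hUH, dilationApprox_apply_coe hUH, hshift, ← map_sub,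
    norm_map_of_mem_unitary (pow_mem (Unitary.star_mem hU) _), pow_succ', mul_apply_eq_comp]
  rfl

theorem norm_dilationApprox_apply_sub_apply_dilationApprox (hU : U ∈ unitary (K →L[ℂ] K))
    (hUH : ∀ x ∈ H, U x ∈ H) {M : K →L[ℂ] K} (hM : ∀ x ∈ H, M x ∈ H) (hMU : Commute U M)
    (n : ℕ) (h : H) :
    ‖dilationApprox U H A n (M h) - M (dilationApprox U H A n h)‖ =
      ‖(A * restrictCLM M H hM - restrictCLM M H hM * A) ((restrictCLM U H hUH ^ n) h)‖ := by
  have hTM := ((commute_restrictCLM hUH hM hMU).pow_left n).eq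
  have hMh : M h = (restrictCLM M H hM h : K) := rfl
  rw [hMh, dilationApprox_apply_coe hUH, dilationApprox_apply_coe hUH, ← mul_apply_eq_comp M,
    ← ((commute_star_of_mem_unitary hU hMU).pow_left n).eq, mul_apply_eq_comp, ← map_sub,
    norm_map_of_mem_unitary (pow_mem (Unitary.star_mem hU) n),
    ← mul_apply_eq_comp _ (restrictCLM M H hM), hTM]
  rfl

theorem orthogonalProjectionOnto_apply_of_tendsto_dilationApprox (hUH : ∀ x ∈ H, U x ∈ H)
    (hA : star (restrictCLM U H hUH) * A * restrictCLM U H hUH = A) {X : K →L[ℂ] K}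
    (hX : ∀ x, Tendsto (fun n => dilationApprox U H A n x) atTop (𝓝 (X x))) (h : H) :
    H.orthogonalProjectionOnto (X h) = A h := by
  refine ext_inner_right ℂ fun g => ?_
  rw [Submodule.inner_orthogonalProjectionOnto_eq_of_mem_right]
  refine tendsto_nhds_unique ((hX h).inner tendsto_const_nhds) ?_
  simp only [inner_dilationApprox_apply_coe hUH hA]
  exact tendsto_const_nhds

theorem commute_of_tendsto_dilationApprox (hU : U ∈ unitary (K →L[ℂ] K)) {X : K →L[ℂ] K}
    (hX : ∀ x, Tendsto (fun n => dilationApprox U H A n x) atTop (𝓝 (X x))) : Commute U X := by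
  rw [commute_unitary_iff_star_left_conjugate hU]
  ext x
  have hlim : Tendsto (fun n => dilationApprox U H A (n + 1) x) atTop
      (𝓝 ((star U * X * U) x)) := by
    simp only [dilationApprox_add, pow_one, mul_apply_eq_comp]
    exact ((star U).continuous.tendsto _).comp (hX (U x))
  exact tendsto_nhds_unique hlim ((hX x).comp (tendsto_add_atTop_nat 1))

theorem commute_of_tendsto_dilationApprox_of_eq_star_mul (hU : U ∈ unitary (K →L[ℂ] K))
    (hUH : ∀ x ∈ H, U x ∈ H)
    (hD : Dense (Submodule.span ℂ (⋃ a : ℕ, ⇑(star U ^ a) '' H) : Set K)) {X : K →L[ℂ] K}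
    (hX : ∀ x, Tendsto (fun n => dilationApprox U H A n x) atTop (𝓝 (X x)))
    {M S : K →L[ℂ] K} (hM : ∀ x ∈ H, M x ∈ H) (hS : ∀ x ∈ H, S x ∈ H) (hMU : Commute U M)
    (hMS : M = star S * U)
    (hAM : A * restrictCLM M H hM = star (restrictCLM S H hS) * A * restrictCLM U H hUH) :
    Commute X M := by
  have hXU := commute_star_of_mem_unitary hU (commute_of_tendsto_dilationApprox hU hX)
  have hMU' := commute_star_of_mem_unitary hU hMU
  refine eq_of_eqOn_of_commute hD (hXU.mul_right hMU') (hMU'.mul_right hXU) fun h hh => ?_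
  lift h to H using hh
  have hcomm : A * restrictCLM M H hM - restrictCLM M H hM * A = star (restrictCLM S H hS) *
      (A * restrictCLM U H hUH - restrictCLM U H hUH * A) := by
    rw [hAM, restrictCLM_eq_star_mul hM hS hUH hMS]
    simp only [mul_sub, mul_assoc]
  have hlim := ((hX (M h)).sub ((M.continuous.tendsto _).comp (hX h)))
  have hzero : Tendsto (fun n => dilationApprox U H A n (M h) - M (dilationApprox U H A n h))
      atTop (𝓝 0) := by
    refine squeeze_zero_norm (fun n => ?_) (by simpa using (((hX h).comp
      (tendsto_add_atTop_nat 1)).sub (hX h)).norm.const_mul ‖star (restrictCLM S H hS)‖)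
    rw [norm_dilationApprox_apply_sub_apply_dilationApprox hU hUH hM hMU, hcomm,
      mul_apply_eq_comp, norm_dilationApprox_succ_apply_coe_sub hU hUH]
    exact le_opNorm _ _
  exact sub_eq_zero.1 (tendsto_nhds_unique hlim hzero)

end Dilation

theorem key_lemma_brownHalmos_general
    {K : Type*} [NormedAddCommGroup K] [InnerProductSpace ℂ K] [CompleteSpace K]
    (N₁ N₂ N₃ : K →L[ℂ] K)
    -- the tuple is commuting
    (hc : ∀ M ∈ ({N₁, N₂, N₃} : Set (K →L[ℂ] K)), ∀ M' ∈ ({N₁, N₂, N₃} : Set (K →L[ℂ] K)),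
      M * M' = M' * M)
    (hU₁ : adjoint N₃ * N₃ = 1) (hU₂ : N₃ * adjoint N₃ = 1)
    (hrel₁ : N₁ = adjoint N₂ * N₃) (hrel₂ : N₂ = adjoint N₁ * N₃)
    -- `H` is a closed subspace invariant under `N₁, N₂, N₃`
    (H : Submodule ℂ K) [CompleteSpace H]
    (hinv₁ : ∀ x ∈ H, N₁ x ∈ H) (hinv₂ : ∀ x ∈ H, N₂ x ∈ H) (hinv₃ : ∀ x ∈ H, N₃ x ∈ H)
    -- minimality: `K` is the closed linear span of `N₁*^α₁ N₂*^α₂ N₃*^α₃ h`, `h ∈ H`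
    (hmin : (Submodule.span ℂ {x : K | ∃ h ∈ H, ∃ α₁ α₂ α₃ : ℕ,
      x = (adjoint N₁ ^ α₁) ((adjoint N₂ ^ α₂) ((adjoint N₃ ^ α₃) h))}).topologicalClosure = ⊤)
    -- `A` satisfies the Brown–Halmos type relations with `Tᵢ = Nᵢ|_H`
    (A : H →L[ℂ] H)
    (hA₁ : A * restrictCLM N₁ H hinv₁ =
      adjoint (restrictCLM N₂ H hinv₂) * A * restrictCLM N₃ H hinv₃)
    (hA₂ : A * restrictCLM N₂ H hinv₂ =
      adjoint (restrictCLM N₁ H hinv₁) * A * restrictCLM N₃ H hinv₃)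
    (hA₃ : adjoint (restrictCLM N₃ H hinv₃) * A * restrictCLM N₃ H hinv₃ = A) :
    ∃ X : K →L[ℂ] K,
      (∀ h : H, Submodule.orthogonalProjectionOnto H (X h) = A h) ∧
      X * N₁ = N₁ * X ∧ X * N₂ = N₂ * X ∧ X * N₃ = N₃ * X ∧ ‖X‖ = ‖A‖ := by
  have hU : N₃ ∈ unitary (K →L[ℂ] K) := Unitary.mem_iff.2 ⟨hU₁, hU₂⟩
  have hN₁ : Commute N₃ N₁ := (hc N₁ (by simp) N₃ (by simp)).symm
  have hN₂ : Commute N₃ N₂ := (hc N₂ (by simp) N₃ (by simp)).symm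
  have hD : Dense (Submodule.span ℂ (⋃ a : ℕ, ⇑(star N₃ ^ a) '' H) : Set K) := by
    refine Dense.mono (SetLike.coe_subset_coe.2 (Submodule.span_mono ?_))
      (Submodule.dense_iff_topologicalClosure_eq_top.2 hmin)
    rintro _ ⟨h, hh, α₁, α₂, α₃, rfl⟩
    have h₃ : (star N₃ ^ α₃) h ∈ ⋃ a : ℕ, ⇑(star N₃ ^ a) '' H :=
      Set.mem_iUnion.2 ⟨α₃, h, hh, rfl⟩
    rw [FunLike.coe_pow_eq_iterate (adjoint N₁), FunLike.coe_pow_eq_iterate (adjoint N₂)]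
    exact ((mapsTo_star_of_eq_star_mul hU hinv₂ hN₂ hrel₂).iterate α₁)
      ((mapsTo_star_of_eq_star_mul hU hinv₁ hN₁ hrel₁).iterate α₂ h₃)
  obtain ⟨X, hXA, hX⟩ := exists_tendsto_dilationApprox hU hinv₃ hA₃ hD
  have hXP := orthogonalProjectionOnto_apply_of_tendsto_dilationApprox hinv₃ hA₃ hX
  refine ⟨X, hXP,
    (commute_of_tendsto_dilationApprox_of_eq_star_mul hU hinv₃ hD hX hinv₁ hinv₂ hN₁ hrel₁ hA₁).eq,
    (commute_of_tendsto_dilationApprox_of_eq_star_mul hU hinv₃ hD hX hinv₂ hinv₁ hN₂ hrel₂ hA₂).eq,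
    (commute_of_tendsto_dilationApprox hU hX).eq.symm,
    le_antisymm hXA (norm_le_of_orthogonalProjectionOnto_apply_eq hXP)⟩

theorem key_lemma_brownHalmos
    {K : Type*} [NormedAddCommGroup K] [InnerProductSpace ℂ K] [CompleteSpace K]
    (N₁ N₂ N₃ : K →L[ℂ] K)
    -- the tuple is commuting
    (hc : ∀ M ∈ ({N₁, N₂, N₃} : Set (K →L[ℂ] K)), ∀ M' ∈ ({N₁, N₂, N₃} : Set (K →L[ℂ] K)),
      M * M' = M' * M)
    -- each `Nᵢ` is normal and the commutation extends to adjoints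
    (hcadj : ∀ M ∈ ({N₁, N₂, N₃} : Set (K →L[ℂ] K)), ∀ M' ∈ ({N₁, N₂, N₃} : Set (K →L[ℂ] K)),
      M * adjoint M' = adjoint M' * M)
    (hU₁ : adjoint N₃ * N₃ = 1) (hU₂ : N₃ * adjoint N₃ = 1)
    (hrel₁ : N₁ = adjoint N₂ * N₃) (hrel₂ : N₂ = adjoint N₁ * N₃)
    -- `H` is a closed subspace invariant under `N₁, N₂, N₃`
    (H : Submodule ℂ K) (hH : IsClosed (H : Set K)) [CompleteSpace H]
    (hinv₁ : ∀ x ∈ H, N₁ x ∈ H) (hinv₂ : ∀ x ∈ H, N₂ x ∈ H) (hinv₃ : ∀ x ∈ H, N₃ x ∈ H)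
    -- minimality: `K` is the closed linear span of `N₁*^α₁ N₂*^α₂ N₃*^α₃ h`, `h ∈ H`
    (hmin : (Submodule.span ℂ {x : K | ∃ h ∈ H, ∃ α₁ α₂ α₃ : ℕ,
      x = (adjoint N₁ ^ α₁) ((adjoint N₂ ^ α₂) ((adjoint N₃ ^ α₃) h))}).topologicalClosure = ⊤)
    -- `A` satisfies the Brown–Halmos type relations with `Tᵢ = Nᵢ|_H`
    (A : H →L[ℂ] H)
    (hA₁ : A * restrictCLM N₁ H hinv₁ =
      adjoint (restrictCLM N₂ H hinv₂) * A * restrictCLM N₃ H hinv₃)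
    (hA₂ : A * restrictCLM N₂ H hinv₂ =
      adjoint (restrictCLM N₁ H hinv₁) * A * restrictCLM N₃ H hinv₃)
    (hA₃ : adjoint (restrictCLM N₃ H hinv₃) * A * restrictCLM N₃ H hinv₃ = A) :
    ∃ X : K →L[ℂ] K,
      (∀ h : H, Submodule.orthogonalProjectionOnto H (X h) = A h) ∧
      X * N₁ = N₁ * X ∧ X * N₂ = N₂ * X ∧ X * N₃ = N₃ * X ∧ ‖X‖ = ‖A‖ :=
  key_lemma_brownHalmos_general N₁ N₂ N₃ hc hU₁ hU₂ hrel₁ hrel₂ H hinv₁ hinv₂ hinv₃ hmin A hA₁ hA₂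
    hA₃
end

section
/- (Necessity direction of the Brown–Halmos characterization, abstract form.) In the abstract setting, let X be a bounded linear operator on K such that X Nᵢ = Nᵢ X and X Nᵢ* = Nᵢ* X for i = 1, 2, 3, and let T : H → H be the compression T = P X|_H. Then T T₁ = T₂* T T₃, T T₂ = T₁* T T₃, and T₃* T T₃ = T. -/
open ContinuousLinearMap

/-! Compression `X ↦ P X|_H` satisfies `P (X N)|_H = (P X|_H) (N|_H)` and, taking adjoints,
`P (N* X)|_H = (N|_H)* (P X|_H)` whenever `H` is `N`-invariant. So the three identities are
compressions of `X N₁ = N₂* X N₃`, `X N₂ = N₁* X N₃` and `N₃* X N₃ = X`, which hold in `K` because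
`X` commutes with the `Nᵢ*` and `N₃` is an isometry. -/

noncomputable def compression {𝕜 K : Type*} [RCLike 𝕜] [NormedAddCommGroup K]
    [InnerProductSpace 𝕜 K] (X : K →L[𝕜] K) (H : Submodule 𝕜 K) [H.HasOrthogonalProjection] :
    H →L[𝕜] H :=
  H.orthogonalProjectionOnto ∘L X ∘L H.subtypeL

theorem adjoint_compression {𝕜 K : Type*} [RCLike 𝕜] [NormedAddCommGroup K]
    [InnerProductSpace 𝕜 K] [CompleteSpace K] (X : K →L[𝕜] K) (H : Submodule 𝕜 K)
    [CompleteSpace H] :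
    adjoint (compression X H) = compression (adjoint X) H := by
  simp only [compression, adjoint_comp, H.adjoint_subtypeL, H.adjoint_orthogonalProjectionOnto,
    comp_assoc]

section Restriction

variable {K : Type*} [NormedAddCommGroup K] [InnerProductSpace ℂ K]
  {N : K →L[ℂ] K} {H : Submodule ℂ K} (hN : ∀ x ∈ H, N x ∈ H)

theorem compression_mul_restrictCLM [H.HasOrthogonalProjection] (X : K →L[ℂ] K) :
    compression (X * N) H = compression X H * restrictCLM N H hN :=
  rfl

theorem adjoint_restrictCLM_mul_compression [CompleteSpace K] [CompleteSpace H] (X : K →L[ℂ] K) :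
    adjoint (restrictCLM N H hN) * compression X H = compression (adjoint N * X) H := by
  apply adjoint.injective
  simp only [mul_def, adjoint_comp, adjoint_compression, adjoint_adjoint]
  exact compression_mul_restrictCLM hN (adjoint X)

end Restriction

theorem compression_satisfies_brownHalmos_general
    {K : Type*} [NormedAddCommGroup K] [InnerProductSpace ℂ K] [CompleteSpace K]
    (N₁ N₂ N₃ : K →L[ℂ] K)
    (hU₁ : adjoint N₃ * N₃ = 1)
    (hrel₁ : N₁ = adjoint N₂ * N₃) (hrel₂ : N₂ = adjoint N₁ * N₃)
    -- `H` is a closed subspace invariant under `N₁, N₂, N₃`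
    (H : Submodule ℂ K) [CompleteSpace H]
    (hinv₁ : ∀ x ∈ H, N₁ x ∈ H) (hinv₂ : ∀ x ∈ H, N₂ x ∈ H) (hinv₃ : ∀ x ∈ H, N₃ x ∈ H)
    -- `X` commutes with the `Nᵢ` and with their adjoints
    (X : K →L[ℂ] K)
    (hXadj : ∀ M ∈ ({N₁, N₂, N₃} : Set (K →L[ℂ] K)), X * adjoint M = adjoint M * X)
    -- `T` is the compression of `X` to `H`
    (T : H →L[ℂ] H) (hT : T = (H.orthogonalProjection).comp (X.comp H.subtypeL)) :
    T * restrictCLM N₁ H hinv₁ =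
        adjoint (restrictCLM N₂ H hinv₂) * T * restrictCLM N₃ H hinv₃ ∧
      T * restrictCLM N₂ H hinv₂ =
        adjoint (restrictCLM N₁ H hinv₁) * T * restrictCLM N₃ H hinv₃ ∧
      adjoint (restrictCLM N₃ H hinv₃) * T * restrictCLM N₃ H hinv₃ = T := by
  replace hT : T = compression X H := hT
  have hX₁ : X * N₁ = adjoint N₂ * (X * N₃) := by
    rw [hrel₁, ← mul_assoc, ← mul_assoc, hXadj N₂ (by simp)]
  have hX₂ : X * N₂ = adjoint N₁ * (X * N₃) := by
    rw [hrel₂, ← mul_assoc, ← mul_assoc, hXadj N₁ (by simp)]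
  have hX₃ : adjoint N₃ * (X * N₃) = X := by
    rw [← mul_assoc, ← hXadj N₃ (by simp), mul_assoc, hU₁, mul_one]
  subst hT
  simp only [mul_assoc, ← compression_mul_restrictCLM, adjoint_restrictCLM_mul_compression,
    hX₁, hX₂, hX₃, and_self]

theorem compression_satisfies_brownHalmos
    {K : Type*} [NormedAddCommGroup K] [InnerProductSpace ℂ K] [CompleteSpace K]
    (N₁ N₂ N₃ : K →L[ℂ] K)
    -- the tuple is commuting
    (hc : ∀ M ∈ ({N₁, N₂, N₃} : Set (K →L[ℂ] K)), ∀ M' ∈ ({N₁, N₂, N₃} : Set (K →L[ℂ] K)),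
      M * M' = M' * M)
    -- each `Nᵢ` is normal and the commutation extends to adjoints
    (hcadj : ∀ M ∈ ({N₁, N₂, N₃} : Set (K →L[ℂ] K)), ∀ M' ∈ ({N₁, N₂, N₃} : Set (K →L[ℂ] K)),
      M * adjoint M' = adjoint M' * M)
    (hU₁ : adjoint N₃ * N₃ = 1) (hU₂ : N₃ * adjoint N₃ = 1)
    (hrel₁ : N₁ = adjoint N₂ * N₃) (hrel₂ : N₂ = adjoint N₁ * N₃)
    -- `H` is a closed subspace invariant under `N₁, N₂, N₃`
    (H : Submodule ℂ K) (hH : IsClosed (H : Set K)) [CompleteSpace H]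
    (hinv₁ : ∀ x ∈ H, N₁ x ∈ H) (hinv₂ : ∀ x ∈ H, N₂ x ∈ H) (hinv₃ : ∀ x ∈ H, N₃ x ∈ H)
    -- `X` commutes with the `Nᵢ` and with their adjoints
    (X : K →L[ℂ] K)
    (hX : ∀ M ∈ ({N₁, N₂, N₃} : Set (K →L[ℂ] K)), X * M = M * X)
    (hXadj : ∀ M ∈ ({N₁, N₂, N₃} : Set (K →L[ℂ] K)), X * adjoint M = adjoint M * X)
    -- `T` is the compression of `X` to `H`
    (T : H →L[ℂ] H) (hT : T = (H.orthogonalProjection).comp (X.comp H.subtypeL)) :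
    T * restrictCLM N₁ H hinv₁ =
        adjoint (restrictCLM N₂ H hinv₂) * T * restrictCLM N₃ H hinv₃ ∧
      T * restrictCLM N₂ H hinv₂ =
        adjoint (restrictCLM N₁ H hinv₁) * T * restrictCLM N₃ H hinv₃ ∧
      adjoint (restrictCLM N₃ H hinv₃) * T * restrictCLM N₃ H hinv₃ = T :=
  compression_satisfies_brownHalmos_general N₁ N₂ N₃ hU₁ hrel₁ hrel₂ H hinv₁ hinv₂ hinv₃ X hXadj T
    hT
end

section
/- (Abstract form of: the only compact Toeplitz operator is zero.) Let H be a complex Hilbert space, let S be a bounded linear isometry on H (‖S h‖ = ‖h‖ for all h ∈ H) whose powers tend to zero in the weak operator topology, i.e., ⟨S^r h, g⟩ → 0 as r → ∞ for all h, g ∈ H. If A is a compact operator on H satisfying S* A S = A, then A = 0. (In the paper, H = H²₋(𝔯_II), S = 𝒯_{φ₃}, and A = 𝒯_u a compact Toeplitz operator; the hypothesis S* A S = A is the third Brown–Halmos relation, and the weak convergence of S^r to 0 follows from the orthonormal basis constructed in Lemma 4.1.) -/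
/-! The powers `S ^ r h` form a bounded, weakly null sequence, so the compact operator `A` maps
them to a norm-null sequence. Iterating `S* A S = A` gives
`⟪A h, A h⟫ = ⟪A (S ^ r h), S ^ r (A h)⟫`, whose modulus is at most `‖A (S ^ r h)‖ ‖A h‖ → 0`. -/

open ContinuousLinearMap Filter Topology

theorem star_pow_mul_mul_pow_of_star_mul_mul_eq {R : Type*} [Monoid R] [StarMul R] {a x : R}
    (h : star a * x * a = x) (n : ℕ) : star (a ^ n) * x * a ^ n = x := by
  induction n with
  | zero => simp
  | succ n ih =>
    calc star (a ^ (n + 1)) * x * a ^ (n + 1) = star a * (star (a ^ n) * x * a ^ n) * a := by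
          simp only [pow_succ, star_mul, mul_assoc]
      _ = x := by rw [ih, h]

theorem ContinuousLinearMap.norm_pow_apply_of_norm_apply {𝕜 E : Type*} [NormedField 𝕜]
    [SeminormedAddCommGroup E] [NormedSpace 𝕜 E] {S : E →L[𝕜] E} (hS : ∀ x, ‖S x‖ = ‖x‖)
    (n : ℕ) (x : E) : ‖(S ^ n) x‖ = ‖x‖ := by
  induction n with
  | zero => simp
  | succ n ih => rw [pow_succ', mul_apply_eq_comp, hS, ih]

section Inner

variable {𝕜 E F : Type*} [RCLike 𝕜] [NormedAddCommGroup E] [InnerProductSpace 𝕜 E]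
  [NormedAddCommGroup F] [InnerProductSpace 𝕜 F]

theorem IsCompact.tendsto_zero_of_inner_tendsto_zero {K : Set E} (hK : IsCompact K)
    {y : ℕ → E} (hyK : ∀ n, y n ∈ K)
    (hy : ∀ g, Tendsto (fun n => inner 𝕜 (y n) g) atTop (𝓝 0)) : Tendsto y atTop (𝓝 0) := by
  refine tendsto_of_subseq_tendsto fun ns hns => ?_
  obtain ⟨z, -, φ, hφ, hz⟩ := hK.tendsto_subseq fun n => hyK (ns n)
  -- testing against `z` itself identifies the norm limit `z` with the weak limit `0`
  have hzz : inner 𝕜 z z = (0 : 𝕜) :=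
    tendsto_nhds_unique (hz.inner tendsto_const_nhds)
      ((hy z).comp (hns.comp hφ.tendsto_atTop))
  exact ⟨φ, inner_self_eq_zero.mp hzz ▸ hz⟩

theorem IsCompactOperator.tendsto_apply_zero_of_inner_tendsto_zero [CompleteSpace E]
    [CompleteSpace F] {A : E →L[𝕜] F} (hA : IsCompactOperator A) {x : ℕ → E} {C : ℝ}
    (hxC : ∀ n, ‖x n‖ ≤ C) (hx : ∀ g, Tendsto (fun n => inner 𝕜 (x n) g) atTop (𝓝 0)) :
    Tendsto (fun n => A (x n)) atTop (𝓝 0) := by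
  refine (hA.isCompact_closure_image_closedBall (𝕜₁ := 𝕜) (f := (A : E →ₗ[𝕜] F)) C)
    |>.tendsto_zero_of_inner_tendsto_zero (𝕜 := 𝕜) (fun n => subset_closure ⟨x n, ?_, rfl⟩)
      fun g => ?_
  · simpa using hxC n
  · simpa only [adjoint_inner_right] using hx (adjoint A g)

end Inner

theorem compact_brownHalmos_eq_zero
    {H : Type*} [NormedAddCommGroup H] [InnerProductSpace ℂ H] [CompleteSpace H]
    (S : H →L[ℂ] H)
    -- `S` is an isometry
    (hiso : ∀ h : H, ‖S h‖ = ‖h‖)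
    -- the powers of `S` tend to zero in the weak operator topology
    (hweak : ∀ h g : H, Tendsto (fun r : ℕ => (inner ℂ ((S ^ r) h) g : ℂ)) atTop (nhds 0))
    -- `A` is a compact operator satisfying `S* A S = A`
    (A : H →L[ℂ] H) (hA : IsCompactOperator A)
    (hSAS : adjoint S * A * S = A) :
    A = 0 := by
  ext h
  have hpow : ∀ r, adjoint (S ^ r) * A * S ^ r = A := by
    simpa only [← star_eq_adjoint] using star_pow_mul_mul_pow_of_star_mul_mul_eq
      (by rwa [star_eq_adjoint])
  have hinner : ∀ r, inner ℂ (A ((S ^ r) h)) ((S ^ r) (A h)) = inner ℂ (A h) (A h) := fun r =>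
    calc inner ℂ (A ((S ^ r) h)) ((S ^ r) (A h))
        = inner ℂ ((adjoint (S ^ r) * A * S ^ r) h) (A h) := by
          rw [mul_apply_eq_comp, mul_apply_eq_comp, adjoint_inner_left]
      _ = inner ℂ (A h) (A h) := by rw [hpow r]
  have hAS : Tendsto (fun r => A ((S ^ r) h)) atTop (𝓝 0) :=
    hA.tendsto_apply_zero_of_inner_tendsto_zero
      (fun r => (norm_pow_apply_of_norm_apply hiso r h).le) (hweak h)
  have hbound : ∀ r, ‖inner ℂ (A h) (A h)‖ ≤ ‖A ((S ^ r) h)‖ * ‖A h‖ := fun r => by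
    rw [← hinner, ← norm_pow_apply_of_norm_apply hiso r (A h)]
    exact norm_inner_le_norm _ _
  have hlim : Tendsto (fun r => ‖A ((S ^ r) h)‖ * ‖A h‖) atTop (𝓝 0) := by
    simpa using hAS.norm.mul_const ‖A h‖
  simpa using ge_of_tendsto' hlim hbound
end
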